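/- arXiv:1905.01368 — 2 statements merged into one kernel-verified Lean document; each statement's English description precedes it below -/
import Mathlib

section
/- Let α, λ be real with α + λ < 0 and α > 0. Then for every dt > 0, both characteristic roots ρ±(dt) of the SBDF2 scheme applied to u' = αu + λu have modulus strictly less than 1; i.e., the scheme is unconditionally stable. -/
/-!
The Schur–Cohn (Jury) conditions `|C| < A`, `|B| < A + C` place both roots of the real quadratic
`A z² - B z + C` strictly inside the unit disc: a non-real root is paired with its conjugate, so
its squared modulus is the product of the roots `C / A`; a real root cannot lie outside `(-1, 1)`
because the quadratic is positive at `±1` and its vertex `B / 2A` lies between them. For the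
SBDF2 polynomial `A - C = 1 - (α + λ) dt` and `A + C - B = -(α + λ) dt` are positive, and so are
`B` and `C` since `α > 0`.
-/

open ComplexConjugate

lemma abs_lt_one_of_quadratic_root {A B C x : ℝ} (hCA : |C| < A) (hB : |B| < A + C)
    (hx : A * x ^ 2 - B * x + C = 0) : |x| < 1 := by
  rw [abs_lt] at hCA hB ⊢
  constructor
  · by_contra! hx1
    nlinarith [mul_nonneg (neg_nonneg.mpr (by linarith : x + 1 ≤ 0))
      (by nlinarith : 0 ≤ B - A * (x - 1))]
  · by_contra! hx1
    nlinarith [mul_nonneg (by linarith : 0 ≤ x - 1) (by nlinarith : 0 ≤ A * (x + 1) - B)]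

lemma Complex.mul_normSq_eq_of_quadratic_root {A B C : ℝ} {z : ℂ} (him : z.im ≠ 0)
    (hz : (A : ℂ) * z ^ 2 - (B : ℂ) * z + (C : ℂ) = 0) : A * Complex.normSq z = C := by
  have hz' : (A : ℂ) * conj z ^ 2 - (B : ℂ) * conj z + (C : ℂ) = 0 := by
    simpa using congrArg conj hz
  have hne : z - conj z ≠ 0 := fun h0 ↦ him (Complex.conj_eq_iff_im.mp (sub_eq_zero.mp h0).symm)
  have hsum : (A : ℂ) * (z + conj z) - B = 0 :=
    (mul_eq_zero.mp (by linear_combination hz - hz')).resolve_left hne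
  have hprod : (A : ℂ) * (z * conj z) = C := by linear_combination z * hsum - hz
  rw [Complex.mul_conj] at hprod
  exact_mod_cast hprod

theorem Complex.norm_lt_one_of_quadratic_root {A B C : ℝ} (hCA : |C| < A) (hB : |B| < A + C)
    {z : ℂ} (hz : (A : ℂ) * z ^ 2 - (B : ℂ) * z + (C : ℂ) = 0) : ‖z‖ < 1 := by
  by_cases him : z.im = 0
  · have hzx : z = (z.re : ℂ) := Complex.ext rfl him
    rw [hzx] at hz ⊢
    rw [Complex.norm_real, Real.norm_eq_abs]
    exact abs_lt_one_of_quadratic_root hCA hB (by exact_mod_cast hz)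
  · have hnorm := Complex.mul_normSq_eq_of_quadratic_root him hz
    have hA : 0 < A := (abs_nonneg C).trans_lt hCA
    have hsq : ‖z‖ ^ 2 < 1 := by
      rw [Complex.sq_norm]
      nlinarith [le_abs_self C]
    nlinarith [norm_nonneg z]

/-- Case `α + λ < 0` and `α > 0`: for every `dt > 0`, every (possibly complex) root of the
SBDF2 characteristic polynomial has modulus strictly less than 1 (unconditional stability). -/
theorem stmt7 (a lam : ℝ) (h : a + lam < 0) (ha : 0 < a) :
    ∀ dt : ℝ, 0 < dt → ∀ z : ℂ,
      ((3/2 - lam*dt : ℝ) : ℂ)*z^2 - ((2 + 2*a*dt : ℝ) : ℂ)*z + ((1/2 + a*dt : ℝ) : ℂ) = 0 →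
      ‖z‖ < 1 := by
  intro dt hdt z hz
  have hadt : 0 < a * dt := mul_pos ha hdt
  have hsum : (a + lam) * dt < 0 := mul_neg_of_neg_of_pos h hdt
  refine Complex.norm_lt_one_of_quadratic_root ?_ ?_ hz
  · rw [abs_of_pos (by linarith)]
    linarith
  · rw [abs_of_pos (by linarith)]
    linarith
end

section
/- For the SBDF2 scheme applied to u' = (λ+α)u (λ implicit, α explicit) with α + λ < 0, the steady state 0 is an asymptotically stable fixed point of the associated two-dimensional discrete dynamical system U^{n+1} = F(U^n), U^n = (u^{n-1}, u^n), whenever both characteristic roots ρ±(dt) have modulus strictly less than 1; in particular, for α > 0 this holds for every dt > 0, and for α < 0, 3α < λ it holds exactly when 0 < dt < 4/(λ - 3α) (restricted to dt < 3/(2λ) when λ > 0). -/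
/-!
Write `p(ρ) = A ρ² - B ρ + C` for the characteristic polynomial, `A = 3/2 - λ dt`. The first coordinate
`u n` of the orbit satisfies `A u (n+2) = B u (n+1) - C u n`. Over `ℂ` the polynomial factors as
`A (ρ - r)(ρ - s)`, so `u (n+1) - r u n = sⁿ (u 1 - r u 0)`; with `t = max ‖r‖ ‖s‖ < 1` this gives
`‖u (n+1)‖ ≤ t ‖u n‖ + tⁿ M`, forcing `u n → 0`. Conversely a real root `ρ` with `|ρ| ≥ 1` yields
the orbit `(ρⁿ, ρⁿ⁺¹)`, which does not converge to `0`. For `A > 0` the roots lie in the open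
unit disc iff `p(1) > 0`, `p(-1) > 0` and `C < A`; when `α < 0 < λ - 3α`, the only one of these
that can fail is `p(-1) = 4 - (λ - 3α) dt > 0`, and if it fails there is a real root `ρ ≤ -1`.
-/

open Filter

/-- The two-dimensional discrete dynamical map encoding the SBDF2 recurrence for
`u' = αu + λu` (α explicit, λ implicit). -/
noncomputable def sbdf2Map (a lam dt : ℝ) : ℝ × ℝ → ℝ × ℝ :=
  fun p => (p.2, (3/2 - lam*dt)⁻¹ * (2*p.2 + 2*dt*a*p.2 - (1/2)*p.1 - dt*a*p.1))

/-- `(0,0)` is asymptotically stable: every orbit converges to it. -/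
noncomputable def sbdf2AsympStable (a lam dt : ℝ) : Prop :=
  ∀ x : ℝ × ℝ, Tendsto (fun n : ℕ => (sbdf2Map a lam dt)^[n] x) atTop (nhds (0, 0))

open Topology

theorem tendsto_zero_of_le_mul_add_pow {t M : ℝ} (ht₀ : 0 ≤ t) (ht₁ : t < 1) {w : ℕ → ℝ}
    (hw : ∀ n, 0 ≤ w n) (h : ∀ n, w (n + 1) ≤ t * w n + t ^ n * M) :
    Tendsto w atTop (𝓝 0) := by
  have bound : ∀ n : ℕ, w (n + 1) ≤ t ^ (n + 1) * w 0 + (n + 1) * t ^ n * M := by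
    intro n
    induction n with
    | zero => simpa using h 0
    | succ n ih =>
      calc w (n + 1 + 1) ≤ t * w (n + 1) + t ^ (n + 1) * M := h (n + 1)
        _ ≤ t * (t ^ (n + 1) * w 0 + (n + 1) * t ^ n * M) + t ^ (n + 1) * M := by gcongr
        _ = t ^ (n + 1 + 1) * w 0 + ((n + 1 : ℕ) + 1) * t ^ (n + 1) * M := by push_cast; ring
  have hpow := tendsto_pow_atTop_nhds_zero_of_lt_one ht₀ ht₁
  have hlim : Tendsto (fun n : ℕ => t ^ (n + 1) * w 0 + (n + 1) * t ^ n * M) atTop (𝓝 0) := by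
    have := ((hpow.const_mul t).mul_const (w 0)).add
      (((tendsto_self_mul_const_pow_of_lt_one ht₀ ht₁).add hpow).mul_const M)
    simpa only [pow_succ', mul_zero, zero_mul, add_zero, add_mul, one_mul] using this
  exact (tendsto_add_atTop_iff_nat 1).mp (squeeze_zero (fun n => hw _) bound hlim)

theorem tendsto_zero_of_linear_recurrence {𝕜 : Type*} [NormedField 𝕜] {r s : 𝕜}
    (hr : ‖r‖ < 1) (hs : ‖s‖ < 1) {u : ℕ → 𝕜}
    (hrec : ∀ n, u (n + 2) = (r + s) * u (n + 1) - r * s * u n) :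
    Tendsto u atTop (𝓝 0) := by
  have hdiff : ∀ n, u (n + 1) - r * u n = s ^ n * (u 1 - r * u 0) := by
    intro n
    induction n with
    | zero => simp
    | succ n ih => rw [pow_succ, mul_comm (s ^ n) s, mul_assoc, ← ih, hrec]; ring
  set t := max ‖r‖ ‖s‖
  have hstep : ∀ n, ‖u (n + 1)‖ ≤ t * ‖u n‖ + t ^ n * ‖u 1 - r * u 0‖ := by
    intro n
    calc ‖u (n + 1)‖ = ‖r * u n + s ^ n * (u 1 - r * u 0)‖ := by rw [← hdiff]; ring_nf
      _ ≤ ‖r‖ * ‖u n‖ + ‖s‖ ^ n * ‖u 1 - r * u 0‖ := by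
        grw [norm_add_le, norm_mul, norm_mul, norm_pow]
      _ ≤ t * ‖u n‖ + t ^ n * ‖u 1 - r * u 0‖ := by
        gcongr
        exacts [le_max_left _ _, le_max_right _ _]
  exact tendsto_zero_iff_norm_tendsto_zero.mpr <| tendsto_zero_of_le_mul_add_pow
    (norm_nonneg r |>.trans (le_max_left _ _)) (max_lt hr hs) (fun n => norm_nonneg _) hstep

theorem exists_mul_add_eq_and_mul_mul_eq {K : Type*} [Field K] [IsAlgClosed K] {a : K}
    (ha : a ≠ 0) (b c : K) : ∃ r s : K, a * (r + s) = b ∧ a * (r * s) = c := by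
  open Polynomial in
  obtain ⟨r, hr⟩ := IsAlgClosed.exists_root (C a * X ^ 2 + C (-b) * X + C c)
    (by rw [degree_quadratic ha]; decide)
  simp only [Polynomial.IsRoot, Polynomial.eval_add, Polynomial.eval_mul, Polynomial.eval_C,
    Polynomial.eval_pow, Polynomial.eval_X] at hr
  refine ⟨r, b / a - r, by field_simp; ring, ?_⟩
  field_simp
  linear_combination -hr

theorem tendsto_zero_of_quadratic_recurrence {K : Type*} [NormedField K] [IsAlgClosed K]
    {a b c : K} (ha : a ≠ 0) (hroots : ∀ z, a * z ^ 2 - b * z + c = 0 → ‖z‖ < 1) {u : ℕ → K}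
    (hrec : ∀ n, a * u (n + 2) = b * u (n + 1) - c * u n) :
    Tendsto u atTop (𝓝 0) := by
  obtain ⟨r, s, hsum, hprod⟩ := exists_mul_add_eq_and_mul_mul_eq ha b c
  refine tendsto_zero_of_linear_recurrence (r := r) (s := s)
    (hroots r (by linear_combination r * hsum - hprod))
    (hroots s (by linear_combination s * hsum - hprod)) fun n => mul_left_cancel₀ ha ?_
  linear_combination hrec n - u (n + 1) * hsum + u n * hprod

theorem norm_lt_one_of_quadratic_eq_zero {a b c : ℝ} (ha : 0 < a) (h₁ : 0 < a - b + c)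
    (h₂ : 0 < a + b + c) (h₃ : c < a) {z : ℂ} (hz : a * z ^ 2 - b * z + c = 0) : ‖z‖ < 1 := by
  obtain ⟨x, y⟩ := z
  have hre := congrArg Complex.re hz
  have him := congrArg Complex.im hz
  simp only [sq, Complex.add_re, Complex.sub_re, Complex.mul_re, Complex.ofReal_re,
    Complex.ofReal_im, Complex.mul_im, zero_mul, sub_zero, Complex.zero_re, Complex.add_im,
    Complex.sub_im, add_zero, Complex.zero_im] at hre him
  replace him : y * (2 * a * x - b) = 0 := by linear_combination him
  suffices x ^ 2 + y ^ 2 < 1 by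
    rwa [← sq_lt_one_iff₀ (norm_nonneg _), Complex.sq_norm, Complex.normSq_apply, ← sq, ← sq]
  rcases mul_eq_zero.mp him with rfl | hx
  · have hx₁ : x < 1 := by nlinarith [sq_nonneg (x - 1)]
    have hx₂ : -1 < x := by nlinarith [sq_nonneg (x + 1)]
    nlinarith
  · have hc : a * (x ^ 2 + y ^ 2) = c := by linear_combination x * hx - hre
    nlinarith

theorem exists_quadratic_eq_zero_le_neg_one {a b c : ℝ} (ha : 0 < a) (h : a + b + c ≤ 0) :
    ∃ ρ ≤ -1, a * ρ ^ 2 - b * ρ + c = 0 := by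
  set d := discrim a (-b) c
  have hd : (b + 2 * a) ^ 2 ≤ d := by
    simp only [d, discrim]
    nlinarith
  have hsq : d = √d * √d := (Real.mul_self_sqrt ((sq_nonneg _).trans hd)).symm
  refine ⟨(b - √d) / (2 * a), ?_, ?_⟩
  · rw [div_le_iff₀ (by positivity)]
    linarith [le_abs_self (b + 2 * a), Real.abs_le_sqrt hd]
  · have := (quadratic_eq_zero_iff ha.ne' hsq ((b - √d) / (2 * a))).mpr (Or.inr (by ring))
    linear_combination this

section SBDF2

variable {a lam dt : ℝ}

theorem sbdf2Map_iterate_succ_fst (x : ℝ × ℝ) (n : ℕ) :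
    ((sbdf2Map a lam dt)^[n + 1] x).1 = ((sbdf2Map a lam dt)^[n] x).2 := by
  rw [Function.iterate_succ_apply']
  rfl

theorem sbdf2Map_iterate_fst_recurrence (hA : 3 / 2 - lam * dt ≠ 0) (x : ℝ × ℝ) (n : ℕ) :
    (3 / 2 - lam * dt) * ((sbdf2Map a lam dt)^[n + 2] x).1 =
      (2 + 2 * a * dt) * ((sbdf2Map a lam dt)^[n + 1] x).1 -
        (1 / 2 + a * dt) * ((sbdf2Map a lam dt)^[n] x).1 := by
  rw [sbdf2Map_iterate_succ_fst, sbdf2Map_iterate_succ_fst, Function.iterate_succ_apply']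
  simp only [sbdf2Map]
  rw [mul_inv_cancel_left₀ hA]
  ring

theorem sbdf2AsympStable_of_roots (hA : 3 / 2 - lam * dt ≠ 0)
    (hroots : ∀ z : ℂ,
      ((3/2 - lam*dt : ℝ) : ℂ)*z^2 - ((2 + 2*a*dt : ℝ) : ℂ)*z + ((1/2 + a*dt : ℝ) : ℂ) = 0 →
      ‖z‖ < 1) :
    sbdf2AsympStable a lam dt := by
  intro x
  set u : ℕ → ℝ := fun n => ((sbdf2Map a lam dt)^[n] x).1
  have hu : Tendsto u atTop (𝓝 0) := by
    rw [← tendsto_ofReal_iff, Complex.ofReal_zero]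
    refine tendsto_zero_of_quadratic_recurrence (by exact_mod_cast hA) hroots fun n => ?_
    exact_mod_cast sbdf2Map_iterate_fst_recurrence hA x n
  refine (hu.prodMk_nhds (hu.comp (tendsto_add_atTop_nat 1))).congr fun n => ?_
  exact Prod.ext rfl (sbdf2Map_iterate_succ_fst x n)

theorem sbdf2Map_iterate_of_root (hA : 3 / 2 - lam * dt ≠ 0) {ρ : ℝ}
    (hρ : (3 / 2 - lam * dt) * ρ ^ 2 - (2 + 2 * a * dt) * ρ + (1 / 2 + a * dt) = 0) (n : ℕ) :
    (sbdf2Map a lam dt)^[n] (1, ρ) = (ρ ^ n, ρ ^ (n + 1)) := by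
  induction n with
  | zero => simp
  | succ n ih =>
    rw [Function.iterate_succ_apply', ih]
    refine Prod.ext rfl ?_
    simp only [sbdf2Map]
    rw [inv_mul_eq_iff_eq_mul₀ hA]
    linear_combination -ρ ^ n * hρ

theorem not_sbdf2AsympStable_of_root (hA : 3 / 2 - lam * dt ≠ 0) {ρ : ℝ} (hρ₁ : 1 ≤ |ρ|)
    (hρ : (3 / 2 - lam * dt) * ρ ^ 2 - (2 + 2 * a * dt) * ρ + (1 / 2 + a * dt) = 0) :
    ¬ sbdf2AsympStable a lam dt := by
  intro hst
  have := (continuous_fst.tendsto _).comp (hst (1, ρ))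
  simp only [Function.comp_def, sbdf2Map_iterate_of_root hA hρ] at this
  exact (tendsto_pow_atTop_nhds_zero_iff.mp this).not_ge hρ₁

theorem sbdf2AsympStable_of_jury (hA : 0 < 3 / 2 - lam * dt) (h₁ : (a + lam) * dt < 0)
    (h₂ : (lam - 3 * a) * dt < 4) : sbdf2AsympStable a lam dt :=
  sbdf2AsympStable_of_roots hA.ne' fun _ =>
    norm_lt_one_of_quadratic_eq_zero hA (by linarith) (by linarith) (by linarith)

theorem not_sbdf2AsympStable_of_four_le (hA : 0 < 3 / 2 - lam * dt)
    (h : 4 ≤ (lam - 3 * a) * dt) : ¬ sbdf2AsympStable a lam dt := by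
  obtain ⟨ρ, hρ, hroot⟩ := exists_quadratic_eq_zero_le_neg_one hA
    (b := 2 + 2 * a * dt) (c := 1 / 2 + a * dt) (by linarith)
  exact not_sbdf2AsympStable_of_root hA.ne' (by rw [abs_of_neg (by linarith)]; linarith) hroot

end SBDF2

/-- For SBDF2 applied to `u' = (λ+α)u` with `α + λ < 0`: the steady state `0` is a fixed
point of the associated map, and it is asymptotically stable whenever both characteristic
roots have modulus `< 1`; in particular for `α > 0` this holds for every `dt > 0`, and for
`α < 0`, `3α < λ` (restricting to `dt < 3/(2λ)` when `λ > 0`) it holds exactly when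
`dt < 4/(λ - 3α)`. -/
theorem stmt18 (a lam : ℝ) (h : a + lam < 0) :
    (∀ dt : ℝ, sbdf2Map a lam dt (0, 0) = (0, 0)) ∧
    (∀ dt : ℝ, 0 < dt → 3 - 2*lam*dt ≠ 0 →
      (∀ z : ℂ,
        ((3/2 - lam*dt : ℝ) : ℂ)*z^2 - ((2 + 2*a*dt : ℝ) : ℂ)*z + ((1/2 + a*dt : ℝ) : ℂ) = 0 →
        ‖z‖ < 1) →
      sbdf2AsympStable a lam dt) ∧
    (0 < a → ∀ dt : ℝ, 0 < dt → sbdf2AsympStable a lam dt) ∧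
    (a < 0 → 3*a < lam → ∀ dt : ℝ, 0 < dt → (0 < lam → dt < 3/(2*lam)) →
      (sbdf2AsympStable a lam dt ↔ dt < 4/(lam - 3*a))) := by
  have hA_pos : ∀ {dt : ℝ}, 0 < dt → (0 < lam → dt < 3 / (2 * lam)) → 0 < 3 / 2 - lam * dt := by
    intro dt hdt hres
    rcases le_or_gt lam 0 with hlam | hlam
    · nlinarith
    · have := (lt_div_iff₀ (by linarith)).mp (hres hlam)
      linarith
  refine ⟨fun dt => by simp [sbdf2Map], fun dt _ h0 hroots => ?_, fun ha dt hdt => ?_,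
    fun ha h3a dt hdt hres => ?_⟩
  · exact sbdf2AsympStable_of_roots (by contrapose! h0; linarith) hroots
  · have hA : 0 < 3 / 2 - lam * dt := hA_pos hdt fun hlam => by linarith
    exact sbdf2AsympStable_of_jury hA (by nlinarith) (by nlinarith)
  · have hA := hA_pos hdt hres
    rw [lt_div_iff₀ (by linarith), mul_comm]
    exact ⟨fun hst => not_le.mp fun h4 => not_sbdf2AsympStable_of_four_le hA h4 hst,
      sbdf2AsympStable_of_jury hA (by nlinarith)⟩
end
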